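/- arXiv:2404.15496 — 2 statements merged into one kernel-verified Lean document; each statement's English description precedes it below -/
import Mathlib

section
/- The map sending a binary relation R ⊆ Σ* × Σ* to its induced closed subset of the typed set of synchronous words is a bijection between binary relations on Σ* and closed subsets of the free synchronous algebra Sync(Σ). -/
/-- Synchronous words over an alphabet `α`, organized by their five types:
`ll` = (Σ×Σ)*, `ll→lb` = (Σ×Σ)*(Σ×{⊥})*, `lb` = (Σ×{⊥})*,
`ll→bl` = (Σ×Σ)*({⊥}×Σ)*, `bl` = ({⊥}×Σ)*.  A word of type `lb` (resp. `bl`,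
and the padded parts of mixed types) is represented by the list of its proper letters. -/
inductive SyncW (α : Type) : Type
  | wll : List (α × α) → SyncW α
  | wlllb : List (α × α) → List α → SyncW α
  | wlb : List α → SyncW α
  | wllbl : List (α × α) → List α → SyncW α
  | wbl : List α → SyncW α

namespace SyncW

variable {α : Type}

/-- The base identifications of the dependency relation on synchronous words. -/
inductive dep0 : SyncW α → SyncW α → Prop
  | ll_lllb (w : List (α × α)) : dep0 (wll w) (wlllb w [])
  | ll_llbl (w : List (α × α)) : dep0 (wll w) (wllbl w [])
  | lb_lllb (s : List α) : dep0 (wlb s) (wlllb [] s)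
  | bl_llbl (s : List α) : dep0 (wbl s) (wllbl [] s)

/-- The dependency relation on `SyncW α`: reflexive-symmetric closure of `dep0`. -/
def dep (x y : SyncW α) : Prop := x = y ∨ dep0 x y ∨ dep0 y x

/-- Decoding a synchronous word into the pair of words it represents
(stripping padding symbols). -/
def decode : SyncW α → List α × List α
  | wll w => (w.map Prod.fst, w.map Prod.snd)
  | wlllb w s => (w.map Prod.fst ++ s, w.map Prod.snd)
  | wlb s => (s, [])
  | wllbl w s => (w.map Prod.fst, w.map Prod.snd ++ s)
  | wbl s => ([], s)

end SyncW

/-- The closed subset of `SyncW α` induced by a binary relation `R ⊆ α* × α*`. -/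
def projS {α : Type} (R : Set (List α × List α)) : Set (SyncW α) :=
  { x | x.decode ∈ R }

/-- A subset of the dependent set `SyncW α` is closed when it is saturated under
the dependency relation. -/
def ClosedW {α : Type} (C : Set (SyncW α)) : Prop :=
  ∀ x y : SyncW α, SyncW.dep x y → (x ∈ C ↔ y ∈ C)

/-!
The equivalence relation generated by `≍` is exactly the kernel of decoding: words with the
same decoding are all connected to the canonical encoding `ofPair` of that pair of words.
Hence the closed subsets are precisely the preimages `decode ⁻¹' R = projS R`, and since
`decode` is surjective, `R` is recovered from `projS R` as its image.
-/

@[simp]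
theorem List.zip_map_fst_map_snd {β γ : Type*} (l : List (β × γ)) :
    (l.map Prod.fst).zip (l.map Prod.snd) = l :=
  (List.zip_of_prod rfl rfl).symm

namespace SyncW

variable {α : Type}

def ofPair (p : List α × List α) : SyncW α :=
  if p.2.length ≤ p.1.length then wlllb ((p.1.take p.2.length).zip p.2) (p.1.drop p.2.length)
  else wllbl (p.1.zip (p.2.take p.1.length)) (p.2.drop p.1.length)

theorem decode_ofPair (p : List α × List α) : (ofPair p).decode = p := by
  obtain ⟨u, v⟩ := p
  unfold ofPair
  split_ifs with h
  · simp [decode, List.map_fst_zip, List.map_snd_zip, h]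
  · simp [decode, List.map_fst_zip, List.map_snd_zip, (not_le.1 h).le]

theorem decode_surjective : Function.Surjective (decode : SyncW α → List α × List α) :=
  fun p => ⟨ofPair p, decode_ofPair p⟩

theorem dep0.decode_eq {x y : SyncW α} (h : dep0 x y) : x.decode = y.decode := by
  cases h <;> simp [decode]

theorem decode_eq_of_dep {x y : SyncW α} (h : dep x y) : x.decode = y.decode := by
  rcases h with rfl | h | h
  exacts [rfl, h.decode_eq, h.decode_eq.symm]

theorem dep0.eqvGen {x y : SyncW α} (h : dep0 x y) : Relation.EqvGen dep x y :=
  .rel _ _ (Or.inr (Or.inl h))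

theorem eqvGen_wllbl_nil_wlllb_nil (w : List (α × α)) :
    Relation.EqvGen dep (wllbl w []) (wlllb w []) :=
  .trans _ _ _ (.symm _ _ (dep0.ll_llbl w).eqvGen) (dep0.ll_lllb w).eqvGen

theorem eqvGen_ofPair_decode (x : SyncW α) : Relation.EqvGen dep x (ofPair x.decode) := by
  cases x with
  | wll w =>
    simpa [ofPair, decode, List.take_of_length_le, List.drop_eq_nil_of_le] using
      (dep0.ll_lllb w).eqvGen
  | wlllb w s => simpa [ofPair, decode] using .refl _
  | wlb s => simpa [ofPair, decode] using (dep0.lb_lllb s).eqvGen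
  | wllbl w s =>
    cases s with
    | nil =>
      simpa [ofPair, decode, List.take_of_length_le, List.drop_eq_nil_of_le] using
        eqvGen_wllbl_nil_wlllb_nil w
    | cons a s => simpa [ofPair, decode] using .refl _
  | wbl s =>
    cases s with
    | nil =>
      simpa [ofPair, decode] using
        (dep0.bl_llbl []).eqvGen.trans _ _ _ (eqvGen_wllbl_nil_wlllb_nil [])
    | cons a s => simpa [ofPair, decode] using (dep0.bl_llbl (a :: s)).eqvGen

theorem eqvGen_dep_iff_decode_eq {x y : SyncW α} :
    Relation.EqvGen dep x y ↔ x.decode = y.decode := by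
  refine ⟨fun h => ?_, fun h => ?_⟩
  · exact (Equivalence.eqvGen_iff (r := fun a b : SyncW α => a.decode = b.decode)
      ⟨fun _ => rfl, .symm, .trans⟩).1 (h.mono fun _ _ => decode_eq_of_dep)
  · exact .trans _ _ _ (eqvGen_ofPair_decode x) (h ▸ .symm _ _ (eqvGen_ofPair_decode y))

end SyncW

theorem ClosedW.mem_iff_of_eqvGen {α : Type} {C : Set (SyncW α)} (hC : ClosedW C)
    {x y : SyncW α} (h : Relation.EqvGen SyncW.dep x y) : x ∈ C ↔ y ∈ C :=
  (Equivalence.eqvGen_iff (r := fun a b => a ∈ C ↔ b ∈ C) ⟨fun _ => .rfl, .symm, .trans⟩).1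
    (h.mono hC)

/-- The map `R ↦ proj R` is a bijection between binary relations
on `α*` and closed subsets of the dependent set of synchronous words `Sync(α)`. -/
theorem projS_bijection_onto_closed_subsets (α : Type) :
    (∀ R : Set (List α × List α), ClosedW (projS R)) ∧
    Function.Injective (fun R : Set (List α × List α) => projS R) ∧
    (∀ C : Set (SyncW α), ClosedW C → ∃ R : Set (List α × List α), projS R = C) := by
  refine ⟨fun R x y hxy => ?_, fun R R' h => ?_, fun C hC => ⟨SyncW.decode '' C, ?_⟩⟩
  · simp only [projS, Set.mem_ofPred_eq, SyncW.decode_eq_of_dep hxy]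
  · exact Set.preimage_injective.2 SyncW.decode_surjective h
  · ext x
    refine ⟨fun ⟨y, hy, hyx⟩ => ?_, fun hx => ⟨x, hx, rfl⟩⟩
    exact (ClosedW.mem_iff_of_eqvGen hC (SyncW.eqvGen_dep_iff_decode_eq.2 hyx)).1 hy
end

section
/- Fix p, q ≥ 1 and I ⊆ Z/pZ, J ⊆ Z/qZ. If the relation R^{I,J} = {(u,v) | (|u| > |v| and |u|−|v| mod p ∈ I) or (|u| < |v| and |v|−|u| mod q ∈ J)} over alphabet Σ = {a,b} is a group relation, then 0 ∉ I and 0 ∉ J. -/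
/-- The paired alphabet `Σ₂⊥ = (Σ×Σ) ⊕ (Σ×{⊥}) ⊕ ({⊥}×Σ)`. -/
def PL (α : Type) : Type := (α × α) ⊕ α ⊕ α

/-- Well-formed words over `Σ₂⊥`. -/
def WF {α : Type} (l : List (PL α)) : Prop :=
  ∃ (w : List (α × α)) (s : List α),
    l = w.map Sum.inl ++ s.map (fun a => Sum.inr (Sum.inl a)) ∨
    l = w.map Sum.inl ++ s.map (fun a => Sum.inr (Sum.inr a))

/-- Decode a word over `Σ₂⊥` into the pair of words it represents. -/
def decodeW {α : Type} (l : List (PL α)) : List α × List α :=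
  (l.filterMap (fun x => match x with
      | Sum.inl p => some p.1
      | Sum.inr (Sum.inl a) => some a
      | Sum.inr (Sum.inr _) => none),
   l.filterMap (fun x => match x with
      | Sum.inl p => some p.2
      | Sum.inr (Sum.inl _) => none
      | Sum.inr (Sum.inr a) => some a))

/-- A relation `R ⊆ α* × α*` is a group relation when there are a finite group
`G`, a monoid morphism `ψ : (Σ₂⊥)* → G` and `Acc ⊆ G` such that every
well-formed word encodes a pair of `R` iff its image under `ψ` lies in `Acc`. -/
def IsGroupRel {α : Type} (R : Set (List α × List α)) : Prop :=
  ∃ (G : Type) (_ : Group G) (_ : Finite G) (ψ : FreeMonoid (PL α) →* G)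
    (Acc : Set G),
    ∀ l : List (PL α), WF l → (decodeW l ∈ R ↔ ψ (FreeMonoid.ofList l) ∈ Acc)

/-- The relation `R^{I,J}`: pairs `(u,v)` with `|u| > |v|` and
`|u| − |v| mod p ∈ I`, or `|u| < |v|` and `|v| − |u| mod q ∈ J`. -/
def RIJ (α : Type) (p q : ℕ) (I : Set (ZMod p)) (J : Set (ZMod q)) :
    Set (List α × List α) :=
  { uv | (uv.2.length < uv.1.length ∧
            ((uv.1.length - uv.2.length : ℕ) : ZMod p) ∈ I) ∨
         (uv.1.length < uv.2.length ∧
            ((uv.2.length - uv.1.length : ℕ) : ZMod q) ∈ J) }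


/-! In a finite group `G` every element satisfies `g ^ |G| = 1`, so a group relation cannot
distinguish the well-formed words `x ^ (m |G|)` and `y ^ (m |G|)` for any two letters `x`, `y`.
The diagonal word `(a,a) ^ (p |G|)` encodes a pair of equal lengths, which is never in `R^{I,J}`;
hence neither is `(a, ⊥) ^ (p |G|)`, i.e. `(a ^ (p |G|), ε)`, which forces `0 ∉ I`. Symmetrically,
`0 ∉ J`. -/

variable {α : Type}

theorem map_ofList_replicate {M : Type} [Monoid M] (ψ : FreeMonoid α →* M) (k : ℕ) (x : α) :
    ψ (FreeMonoid.ofList (List.replicate k x)) = ψ (FreeMonoid.of x) ^ k := by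
  induction k with
  | zero => simp
  | succ k ih => rw [List.replicate_succ, FreeMonoid.ofList_cons, map_mul, ih, pow_succ']

theorem wf_replicate (k : ℕ) (x : PL α) : WF (List.replicate k x) := by
  rcases x with ⟨a, b⟩ | a | a
  · refine ⟨List.replicate k (a, b), [], Or.inl ?_⟩
    rw [List.map_replicate, List.map_nil]
    exact (List.append_nil _).symm
  · refine ⟨[], List.replicate k a, Or.inl ?_⟩
    rw [List.map_replicate, List.map_nil]
    exact (List.nil_append _).symm
  · refine ⟨[], List.replicate k a, Or.inr ?_⟩
    rw [List.map_replicate, List.map_nil]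
    exact (List.nil_append _).symm

theorem decodeW_replicate_inl (k : ℕ) (a b : α) :
    decodeW (List.replicate k (Sum.inl (a, b) : PL α)) = (List.replicate k a, List.replicate k b) :=
  Prod.ext (List.filterMap_replicate_of_some rfl) (List.filterMap_replicate_of_some rfl)

theorem decodeW_replicate_inr_inl (k : ℕ) (a : α) :
    decodeW (List.replicate k (Sum.inr (Sum.inl a) : PL α)) = (List.replicate k a, []) :=
  Prod.ext (List.filterMap_replicate_of_some rfl) (List.filterMap_replicate_of_none rfl)

theorem decodeW_replicate_inr_inr (k : ℕ) (a : α) :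
    decodeW (List.replicate k (Sum.inr (Sum.inr a) : PL α)) = ([], List.replicate k a) :=
  Prod.ext (List.filterMap_replicate_of_none rfl) (List.filterMap_replicate_of_some rfl)

theorem IsGroupRel.exists_replicate_mem_iff {R : Set (List α × List α)} (h : IsGroupRel R) :
    ∃ N > 0, ∀ (x y : PL α) (m : ℕ),
      decodeW (List.replicate (m * N) x) ∈ R ↔ decodeW (List.replicate (m * N) y) ∈ R := by
  obtain ⟨G, _, _, ψ, Acc, hψ⟩ := h
  have hpow (x : PL α) (m : ℕ) :
      ψ (FreeMonoid.ofList (List.replicate (m * Nat.card G) x)) = 1 := by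
    rw [map_ofList_replicate, pow_mul, pow_card_eq_one']
  refine ⟨Nat.card G, Nat.card_pos, fun x y m => ?_⟩
  rw [hψ _ (wf_replicate _ x), hψ _ (wf_replicate _ y), hpow, hpow]

section RIJ

variable {p q : ℕ} {I : Set (ZMod p)} {J : Set (ZMod q)}

theorem notMem_RIJ_of_length_eq {u v : List α} (h : u.length = v.length) :
    (u, v) ∉ RIJ α p q I J := by
  simp [RIJ, h]

theorem mem_RIJ_nil_right_iff {u : List α} :
    (u, []) ∈ RIJ α p q I J ↔ 0 < u.length ∧ (u.length : ZMod p) ∈ I := by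
  simp [RIJ]

theorem mem_RIJ_nil_left_iff {v : List α} :
    ([], v) ∈ RIJ α p q I J ↔ 0 < v.length ∧ (v.length : ZMod q) ∈ J := by
  simp [RIJ]

end RIJ

/-- For `p, q ≥ 1` and `I ⊆ ℤ/pℤ`, `J ⊆ ℤ/qℤ`, if the
relation `R^{I,J}` over the two-letter alphabet `Σ = {a,b}` is a group relation,
then `0 ∉ I` and `0 ∉ J`. -/
theorem RIJ_groupRel_necessary (p q : ℕ) (hp : 1 ≤ p) (hq : 1 ≤ q)
    (I : Set (ZMod p)) (J : Set (ZMod q))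
    (h : IsGroupRel (RIJ Bool p q I J)) :
    (0 : ZMod p) ∉ I ∧ (0 : ZMod q) ∉ J := by
  obtain ⟨N, hN, hiff⟩ := h.exists_replicate_mem_iff
  have hdiag (m : ℕ) :
      decodeW (List.replicate (m * N) (Sum.inl (true, true))) ∉ RIJ Bool p q I J := by
    rw [decodeW_replicate_inl]
    exact notMem_RIJ_of_length_eq rfl
  refine ⟨fun h0 => hdiag p ((hiff (Sum.inr (Sum.inl true)) _ p).1 ?_),
    fun h0 => hdiag q ((hiff (Sum.inr (Sum.inr true)) _ q).1 ?_)⟩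
  · rw [decodeW_replicate_inr_inl, mem_RIJ_nil_right_iff]
    simpa [h0] using Nat.mul_pos hp hN
  · rw [decodeW_replicate_inr_inr, mem_RIJ_nil_left_iff]
    simpa [h0] using Nat.mul_pos hq hN
end
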